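/- arXiv:2209.08951 — 4 statements merged into one kernel-verified Lean document; each statement's English description precedes it below -/
import Mathlib

section
/- Let f : ℝ^d → ℝ be α-strongly convex and β-smooth with 0 < α ≤ β, let Θ ⊆ ℝ^d be nonempty closed convex, and let η ∈ (0, 2/β). Then the projected gradient step θ ↦ Π_Θ(θ − η∇f(θ)) is γ-contractive with γ = √(1 − 2αη + αβη²), i.e., ‖Π_Θ(θ − η∇f(θ)) − Π_Θ(θ' − η∇f(θ'))‖ ≤ γ‖θ − θ'‖ for all θ, θ'. -/
/-!
The projection onto a convex set is nonexpansive, by the variational inequality characterising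
nearest points, so it suffices to bound the gradient step. With `Δ = θ - θ'` and
`g = ∇f(θ) - ∇f(θ')` we have `‖Δ - η g‖² = ‖Δ‖² - 2η⟪g, Δ⟫ + η²‖g‖²`. Strong convexity gives
`α‖Δ‖² ≤ ⟪g, Δ⟫`, and convexity together with the descent lemma gives cocoercivity
`‖g‖² ≤ β⟪g, Δ⟫`; since `ηβ ≤ 2` these bound the right-hand side by `(1 - 2αη + αβη²)‖Δ‖²`.
-/

open scoped RealInnerProductSpace

variable {E : Type*} [NormedAddCommGroup E] [InnerProductSpace ℝ E]

section Bregman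

def bregmanDiv (f : E → ℝ) (f' : E → E) (x y : E) : ℝ :=
  f x - f y - ⟪f' y, x - y⟫

variable {f : E → ℝ} {f' : E → E}

theorem bregmanDiv_add_bregmanDiv (x y : E) :
    bregmanDiv f f' x y + bregmanDiv f f' y x = ⟪f' x - f' y, x - y⟫ := by
  have hyx : y - x = -(x - y) := (neg_sub x y).symm
  simp only [bregmanDiv, hyx, inner_neg_right, inner_sub_left]
  ring

theorem mul_sq_norm_sub_le_inner_of_le_bregmanDiv {α : ℝ}
    (hsc : ∀ x y, α / 2 * ‖x - y‖ ^ 2 ≤ bregmanDiv f f' x y) (x y : E) :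
    α * ‖x - y‖ ^ 2 ≤ ⟪f' x - f' y, x - y⟫ := by
  have hxy := hsc x y
  have hyx := hsc y x
  rw [norm_sub_rev] at hyx
  linarith [bregmanDiv_add_bregmanDiv (f := f) (f' := f') x y]

theorem HasGradientAt.hasDerivAt_comp_add_smul [CompleteSpace E] {g x v : E} {t : ℝ}
    (h : HasGradientAt f g (x + t • v)) :
    HasDerivAt (fun s : ℝ => f (x + s • v)) ⟪g, v⟫ t := by
  have hline : HasDerivAt (fun s : ℝ => x + s • v) v t := by
    simpa using ((hasDerivAt_id t).smul_const v).const_add x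
  have h' := h.hasFDerivAt.comp_hasDerivAt t hline
  simp only [InnerProductSpace.toDual_apply_apply] at h'
  exact h'

theorem bregmanDiv_le_of_lipschitz_gradient [CompleteSpace E] {β : ℝ}
    (hgrad : ∀ x, HasGradientAt f (f' x) x) (hsm : ∀ x y, ‖f' x - f' y‖ ≤ β * ‖x - y‖)
    (x y : E) : bregmanDiv f f' x y ≤ β / 2 * ‖x - y‖ ^ 2 := by
  set v := x - y
  -- `φ` has nonpositive derivative on `[0, 1]`, so `φ 1 ≤ φ 0` is the claim
  let φ : ℝ → ℝ := fun t => f (y + t • v) - t * ⟪f' y, v⟫ - β / 2 * t ^ 2 * ‖v‖ ^ 2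
  have hφ : ∀ t, HasDerivAt φ (⟪f' (y + t • v) - f' y, v⟫ - β * t * ‖v‖ ^ 2) t := by
    intro t
    have h := ((hgrad (y + t • v)).hasDerivAt_comp_add_smul.sub
      ((hasDerivAt_id t).mul_const ⟪f' y, v⟫)).sub
      (((hasDerivAt_pow 2 t).const_mul (β / 2)).mul_const (‖v‖ ^ 2))
    refine h.congr_deriv ?_
    simp only [inner_sub_left]
    push_cast
    ring
  obtain ⟨c, ⟨hc0, -⟩, hc⟩ := exists_hasDerivAt_eq_slope φ _ zero_lt_one
    (fun t _ => (hφ t).continuousAt.continuousWithinAt) (fun t _ => hφ t)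
  have hderiv : ⟪f' (y + c • v) - f' y, v⟫ - β * c * ‖v‖ ^ 2 ≤ 0 := by
    have hlip : ‖f' (y + c • v) - f' y‖ ≤ β * (c * ‖v‖) := by
      simpa [norm_smul, abs_of_pos hc0] using hsm (y + c • v) y
    have := (real_inner_le_norm _ _).trans (mul_le_mul_of_nonneg_right hlip (norm_nonneg v))
    linarith
  rw [hc] at hderiv
  have hyv : y + v = x := add_sub_cancel y x
  simp only [φ, one_smul, zero_smul, add_zero, hyv, sub_zero, div_one, zero_mul, one_pow,
    mul_one, ne_eq, OfNat.ofNat_ne_zero, not_false_eq_true, zero_pow] at hderiv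
  simp only [bregmanDiv]
  linarith

theorem sq_norm_sub_le_mul_bregmanDiv {β : ℝ} (hβ : 0 < β)
    (hcvx : ∀ x y, 0 ≤ bregmanDiv f f' x y)
    (hdesc : ∀ x y, bregmanDiv f f' x y ≤ β / 2 * ‖x - y‖ ^ 2) (x y : E) :
    ‖f' x - f' y‖ ^ 2 ≤ 2 * β * bregmanDiv f f' x y := by
  set g := f' x - f' y
  -- `z` is one gradient step from `x` for `f - ⟪f' y, ·⟫`, a convex function minimised at `y`
  set z := x - β⁻¹ • g
  have h1 := hcvx z y
  have h2 := hdesc z x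
  have hzx : z - x = -(β⁻¹ • g) := by simp [z]
  have hzy : z - y = (x - y) - β⁻¹ • g := by simp only [z]; abel
  have hg : β⁻¹ * ⟪f' x, g⟫ - β⁻¹ * ⟪f' y, g⟫ = β⁻¹ * ‖g‖ ^ 2 := by
    rw [← mul_sub, ← inner_sub_left, real_inner_self_eq_norm_sq]
  have hle : β⁻¹ * ‖g‖ ^ 2 - β / 2 * (β⁻¹ * ‖g‖) ^ 2 ≤ bregmanDiv f f' x y := by
    simp only [bregmanDiv, hzx, hzy, inner_neg_right, inner_sub_right, inner_smul_right,
      norm_neg, norm_smul, Real.norm_of_nonneg (inv_nonneg.2 hβ.le)] at h1 h2 ⊢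
    linarith
  calc ‖g‖ ^ 2 = 2 * β * (β⁻¹ * ‖g‖ ^ 2 - β / 2 * (β⁻¹ * ‖g‖) ^ 2) := by
        field_simp
        ring
    _ ≤ 2 * β * bregmanDiv f f' x y := by gcongr

theorem sq_norm_sub_le_mul_inner_of_bregmanDiv {β : ℝ} (hβ : 0 < β)
    (hcvx : ∀ x y, 0 ≤ bregmanDiv f f' x y)
    (hdesc : ∀ x y, bregmanDiv f f' x y ≤ β / 2 * ‖x - y‖ ^ 2) (x y : E) :
    ‖f' x - f' y‖ ^ 2 ≤ β * ⟪f' x - f' y, x - y⟫ := by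
  have hxy := sq_norm_sub_le_mul_bregmanDiv hβ hcvx hdesc x y
  have hyx := sq_norm_sub_le_mul_bregmanDiv hβ hcvx hdesc y x
  rw [norm_sub_rev] at hyx
  rw [← bregmanDiv_add_bregmanDiv, mul_add]
  linarith

end Bregman

theorem norm_sub_smul_le_sqrt_mul_norm {α β η : ℝ} {Δ g : E} (hη : 0 ≤ η) (hηβ : η * β ≤ 2)
    (hmono : α * ‖Δ‖ ^ 2 ≤ ⟪g, Δ⟫) (hcoco : ‖g‖ ^ 2 ≤ β * ⟪g, Δ⟫) :
    ‖Δ - η • g‖ ≤ Real.sqrt (1 - 2 * α * η + α * β * η ^ 2) * ‖Δ‖ := by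
  have hsq : ‖Δ - η • g‖ ^ 2 ≤ (1 - 2 * α * η + α * β * η ^ 2) * ‖Δ‖ ^ 2 := by
    rw [norm_sub_sq_real, real_inner_smul_right, real_inner_comm, norm_smul, mul_pow,
      Real.norm_eq_abs, sq_abs]
    have h1 : η ^ 2 * ‖g‖ ^ 2 ≤ η ^ 2 * (β * ⟪g, Δ⟫) := by gcongr
    have h2 : η * (2 - η * β) * (α * ‖Δ‖ ^ 2) ≤ η * (2 - η * β) * ⟪g, Δ⟫ :=
      mul_le_mul_of_nonneg_left hmono (mul_nonneg hη (by linarith))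
    nlinarith
  calc ‖Δ - η • g‖ = Real.sqrt (‖Δ - η • g‖ ^ 2) := (Real.sqrt_sq (norm_nonneg _)).symm
    _ ≤ Real.sqrt ((1 - 2 * α * η + α * β * η ^ 2) * ‖Δ‖ ^ 2) := Real.sqrt_le_sqrt hsq
    _ = Real.sqrt (1 - 2 * α * η + α * β * η ^ 2) * ‖Δ‖ := by
      rw [Real.sqrt_mul' _ (sq_nonneg _), Real.sqrt_sq (norm_nonneg _)]

section NearestPoint

variable {K : Set E} {proj : E → E}

theorem real_inner_sub_proj_sub_proj_nonpos (hK : Convex ℝ K) (hmem : ∀ x, proj x ∈ K)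
    (hmin : ∀ x, ∀ z ∈ K, ‖x - proj x‖ ≤ ‖x - z‖) (x : E) {z : E} (hz : z ∈ K) :
    ⟪x - proj x, z - proj x⟫ ≤ 0 := by
  have : Nonempty K := ⟨⟨proj x, hmem x⟩⟩
  have hbdd : BddBelow (Set.range fun w : K => ‖x - w‖) :=
    ⟨0, by rintro _ ⟨w, rfl⟩; exact norm_nonneg _⟩
  refine (norm_eq_iInf_iff_real_inner_le_zero hK (hmem x)).1 ?_ z hz
  exact le_antisymm (le_ciInf fun w => hmin x w w.2) (ciInf_le hbdd ⟨proj x, hmem x⟩)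

theorem norm_proj_sub_proj_le (hK : Convex ℝ K) (hmem : ∀ x, proj x ∈ K)
    (hmin : ∀ x, ∀ z ∈ K, ‖x - proj x‖ ≤ ‖x - z‖) (x y : E) :
    ‖proj x - proj y‖ ≤ ‖x - y‖ := by
  set p := proj x
  set q := proj y
  have hx := real_inner_sub_proj_sub_proj_nonpos hK hmem hmin x (hmem y)
  have hy := real_inner_sub_proj_sub_proj_nonpos hK hmem hmin y (hmem x)
  have hsplit : ⟪x - y, p - q⟫ = ‖p - q‖ ^ 2 - ⟪x - p, q - p⟫ - ⟪y - q, p - q⟫ := by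
    have hqp : q - p = -(p - q) := (neg_sub p q).symm
    rw [hqp, inner_neg_right, ← real_inner_self_eq_norm_sq]
    simp only [inner_sub_left]
    ring
  -- firm nonexpansiveness `‖p - q‖² ≤ ⟪x - y, p - q⟫`, then Cauchy–Schwarz
  nlinarith [real_inner_le_norm (x - y) (p - q), norm_nonneg (x - y), norm_nonneg (p - q)]

end NearestPoint

theorem projected_gd_step_contractive_general
    {d : ℕ} (f : EuclideanSpace ℝ (Fin d) → ℝ)
    (f' : EuclideanSpace ℝ (Fin d) → EuclideanSpace ℝ (Fin d))
    (hgrad : ∀ θ, HasGradientAt f (f' θ) θ)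
    (α β η : ℝ) (hα : 0 < α)
    (hsc : ∀ θ θ' : EuclideanSpace ℝ (Fin d),
      α / 2 * ‖θ - θ'‖ ^ 2 ≤ f θ - f θ' - ⟪f' θ', θ - θ'⟫)
    (hsm : ∀ θ θ' : EuclideanSpace ℝ (Fin d), ‖f' θ - f' θ'‖ ≤ β * ‖θ - θ'‖)
    (hη0 : 0 < η) (hη2 : η < 2 / β)
    (Θ : Set (EuclideanSpace ℝ (Fin d)))
    (hconv : Convex ℝ Θ)
    (proj : EuclideanSpace ℝ (Fin d) → EuclideanSpace ℝ (Fin d))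
    (hmem : ∀ x, proj x ∈ Θ)
    (hmin : ∀ x, ∀ z ∈ Θ, ‖x - proj x‖ ≤ ‖x - z‖) :
    ∀ θ θ' : EuclideanSpace ℝ (Fin d),
      ‖proj (θ - η • f' θ) - proj (θ' - η • f' θ')‖ ≤
        Real.sqrt (1 - 2 * α * η + α * β * η ^ 2) * ‖θ - θ'‖ := by
  intro θ θ'
  have hβ : 0 < β := by
    by_contra! hβ
    exact (hη0.trans hη2).not_ge (div_nonpos_of_nonneg_of_nonpos zero_le_two hβ)
  have hηβ : η * β ≤ 2 := ((lt_div_iff₀ hβ).1 hη2).le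
  have hcvx : ∀ x y, 0 ≤ bregmanDiv f f' x y := fun x y =>
    (by positivity : (0 : ℝ) ≤ α / 2 * ‖x - y‖ ^ 2).trans (hsc x y)
  have hcoco := sq_norm_sub_le_mul_inner_of_bregmanDiv hβ hcvx
    (bregmanDiv_le_of_lipschitz_gradient hgrad hsm) θ θ'
  have hmono := mul_sq_norm_sub_le_inner_of_le_bregmanDiv hsc θ θ'
  calc ‖proj (θ - η • f' θ) - proj (θ' - η • f' θ')‖
      ≤ ‖(θ - η • f' θ) - (θ' - η • f' θ')‖ := norm_proj_sub_proj_le hconv hmem hmin _ _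
    _ = ‖(θ - θ') - η • (f' θ - f' θ')‖ := by rw [smul_sub, sub_sub_sub_comm]
    _ ≤ _ := norm_sub_smul_le_sqrt_mul_norm hη0.le hηβ hmono hcoco

/-- The projected gradient descent step for an `α`-strongly convex, `β`-smooth
function, with projection onto a nonempty closed convex set `Θ`, is
`γ`-contractive with `γ = √(1 − 2αη + αβη²)`. -/
theorem projected_gd_step_contractive
    {d : ℕ} (f : EuclideanSpace ℝ (Fin d) → ℝ)
    (f' : EuclideanSpace ℝ (Fin d) → EuclideanSpace ℝ (Fin d))
    (hgrad : ∀ θ, HasGradientAt f (f' θ) θ)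
    (α β η : ℝ) (hα : 0 < α) (hαβ : α ≤ β)
    (hsc : ∀ θ θ' : EuclideanSpace ℝ (Fin d),
      α / 2 * ‖θ - θ'‖ ^ 2 ≤ f θ - f θ' - ⟪f' θ', θ - θ'⟫)
    (hsm : ∀ θ θ' : EuclideanSpace ℝ (Fin d), ‖f' θ - f' θ'‖ ≤ β * ‖θ - θ'‖)
    (hη0 : 0 < η) (hη2 : η < 2 / β)
    (Θ : Set (EuclideanSpace ℝ (Fin d)))
    (hne : Θ.Nonempty) (hclosed : IsClosed Θ) (hconv : Convex ℝ Θ)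
    (proj : EuclideanSpace ℝ (Fin d) → EuclideanSpace ℝ (Fin d))
    (hmem : ∀ x, proj x ∈ Θ)
    (hmin : ∀ x, ∀ z ∈ Θ, ‖x - proj x‖ ≤ ‖x - z‖) :
    ∀ θ θ' : EuclideanSpace ℝ (Fin d),
      ‖proj (θ - η • f' θ) - proj (θ' - η • f' θ')‖ ≤
        Real.sqrt (1 - 2 * α * η + α * β * η ^ 2) * ‖θ - θ'‖ :=
  projected_gd_step_contractive_general f f' hgrad α β η hα hsc hsm hη0 hη2 Θ hconv proj hmem hmin
end

section
/- Let f : ℝ^d → ℝ be convex, differentiable, and β-smooth (β > 0). Then for all θ, θ' ∈ ℝ^d, ⟨∇f(θ) − ∇f(θ'), θ − θ'⟩ ≥ (1/β)‖∇f(θ) − ∇f(θ')‖² (co-coercivity of the gradient). -/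
/-!
Convexity gives the first-order lower bound `f x + ⟪∇f x, y - x⟫ ≤ f y`, and `β`-smoothness the
quadratic upper bound `f y ≤ f x + ⟪∇f x, y - x⟫ + β/2 ‖y - x‖²`. Applying the lower bound at `x`
and the upper bound at `y` to the gradient step `z = y - β⁻¹ (∇f y - ∇f x)` sharpens the lower
bound by `(2β)⁻¹ ‖∇f y - ∇f x‖²`; adding this to its copy with `x` and `y` exchanged gives
co-coercivity.
-/

open scoped RealInnerProductSpace

section NormedSpace

open AffineMap

variable {E : Type*} [NormedAddCommGroup E] [NormedSpace ℝ E] {f : E → ℝ}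

theorem ConvexOn.add_apply_sub_le_of_hasFDerivAt {s : Set E} {f' : E →L[ℝ] ℝ} {x y : E}
    (hf : ConvexOn ℝ s f) (hx : x ∈ s) (hy : y ∈ s) (hd : HasFDerivAt f f' x) :
    f x + f' (y - x) ≤ f y := by
  have hline : ConvexOn ℝ (lineMap x y ⁻¹' s) (f ∘ lineMap x y) := hf.comp_affineMap _
  have hd₀ : HasFDerivAt f f' (lineMap x y (0 : ℝ)) := by simpa using hd
  have hslope := hline.le_slope_of_hasDerivAt (by simpa using hx) (by simpa using hy) zero_lt_one
    (hd₀.comp_hasDerivAt (0 : ℝ) hasDerivAt_lineMap)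
  simp only [slope_def_field, Function.comp_apply, lineMap_apply_zero, lineMap_apply_one,
    sub_zero, div_one] at hslope
  linarith

theorem apply_le_add_apply_sub_add_sq_of_hasFDerivAt {f' : E → E →L[ℝ] ℝ} {β : ℝ}
    (hd : ∀ x, HasFDerivAt f (f' x) x) (hsm : ∀ x y, ‖f' x - f' y‖ ≤ β * ‖x - y‖) (x y : E) :
    f y ≤ f x + f' x (y - x) + β / 2 * ‖y - x‖ ^ 2 := by
  set v := y - x
  -- `ψ` is antitone on `[0, ∞)` since `f'` is `β`-Lipschitz, and `ψ 1 ≤ ψ 0` is the claim.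
  let ψ : ℝ → ℝ := fun t => f (lineMap x y t) - t * f' x v - β / 2 * t ^ 2 * ‖v‖ ^ 2
  have hψ : ∀ t, HasDerivAt ψ ((f' (lineMap x y t) - f' x) v - β * t * ‖v‖ ^ 2) t := by
    intro t
    refine ((((hd _).comp_hasDerivAt t (hasDerivAt_lineMap (a := x) (b := y))).sub
      ((hasDerivAt_id t).mul_const (f' x v))).sub
      (((hasDerivAt_pow 2 t).const_mul (β / 2)).mul_const (‖v‖ ^ 2))).congr_deriv ?_
    simp only [FunLike.coe_sub, Pi.sub_apply, v]
    ring
  have hψ_nonpos : ∀ t ∈ interior (Set.Ici (0 : ℝ)),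
      (f' (lineMap x y t) - f' x) v - β * t * ‖v‖ ^ 2 ≤ 0 := by
    intro t ht
    rw [interior_Ici, Set.mem_Ioi] at ht
    have hdist : ‖lineMap x y t - x‖ = t * ‖v‖ := by
      rw [← vsub_eq_sub, lineMap_vsub_left, norm_smul, Real.norm_of_nonneg ht.le, vsub_eq_sub]
    have hbound : (f' (lineMap x y t) - f' x) v ≤ β * t * ‖v‖ ^ 2 :=
      calc (f' (lineMap x y t) - f' x) v
          ≤ ‖f' (lineMap x y t) - f' x‖ * ‖v‖ :=
            (Real.le_norm_self _).trans (ContinuousLinearMap.le_opNorm _ _)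
        _ ≤ β * (t * ‖v‖) * ‖v‖ := by gcongr; exact hdist ▸ hsm _ _
        _ = β * t * ‖v‖ ^ 2 := by ring
    linarith
  have hanti := antitoneOn_of_hasDerivWithinAt_nonpos (convex_Ici 0)
    (fun t _ => (hψ t).continuousAt.continuousWithinAt) (fun t _ => (hψ t).hasDerivWithinAt)
    hψ_nonpos (Set.mem_Ici.mpr le_rfl) (Set.mem_Ici.mpr zero_le_one) zero_le_one
  simp only [ψ, lineMap_apply_zero, lineMap_apply_one] at hanti
  linarith

end NormedSpace

section InnerProductSpace

variable {E : Type*} [NormedAddCommGroup E] [InnerProductSpace ℝ E] [CompleteSpace E]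
  {f : E → ℝ} {f' : E → E} {β : ℝ}

theorem ConvexOn.add_inner_sub_le_of_hasGradientAt {s : Set E} {x y : E} (hf : ConvexOn ℝ s f)
    (hx : x ∈ s) (hy : y ∈ s) (hd : HasGradientAt f (f' x) x) :
    f x + ⟪f' x, y - x⟫ ≤ f y :=
  hf.add_apply_sub_le_of_hasFDerivAt hx hy hd

theorem apply_le_add_inner_sub_add_sq_of_hasGradientAt (hd : ∀ x, HasGradientAt f (f' x) x)
    (hsm : ∀ x y, ‖f' x - f' y‖ ≤ β * ‖x - y‖) (x y : E) :
    f y ≤ f x + ⟪f' x, y - x⟫ + β / 2 * ‖y - x‖ ^ 2 :=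
  apply_le_add_apply_sub_add_sq_of_hasFDerivAt hd
    (fun x y => by rw [← map_sub, LinearIsometryEquiv.norm_map]; exact hsm x y) x y

theorem ConvexOn.add_inner_add_sq_norm_sub_le (hf : ConvexOn ℝ Set.univ f)
    (hd : ∀ x, HasGradientAt f (f' x) x) (hβ : 0 < β) (hsm : ∀ x y, ‖f' x - f' y‖ ≤ β * ‖x - y‖)
    (x y : E) :
    f x + ⟪f' x, y - x⟫ + β⁻¹ / 2 * ‖f' y - f' x‖ ^ 2 ≤ f y := by
  set u := f' y - f' x
  have hconv := hf.add_inner_sub_le_of_hasGradientAt (Set.mem_univ x)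
    (Set.mem_univ (y - β⁻¹ • u)) (hd x)
  have hsmooth := apply_le_add_inner_sub_add_sq_of_hasGradientAt hd hsm y (y - β⁻¹ • u)
  rw [sub_right_comm, inner_sub_right, real_inner_smul_right] at hconv
  rw [sub_sub_cancel_left, inner_neg_right, real_inner_smul_right, norm_neg, norm_smul,
    Real.norm_of_nonneg (inv_nonneg.2 hβ.le)] at hsmooth
  have hstep : β / 2 * (β⁻¹ * ‖u‖) ^ 2 = β⁻¹ / 2 * ‖u‖ ^ 2 := by field_simp
  have hu : β⁻¹ * ⟪f' y, u⟫ - β⁻¹ * ⟪f' x, u⟫ = β⁻¹ * ‖u‖ ^ 2 := by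
    rw [← mul_sub, ← inner_sub_left, real_inner_self_eq_norm_sq]
  linarith

end InnerProductSpace

/-- Co-coercivity of the gradient of a convex `β`-smooth function:
`⟨∇f(θ) − ∇f(θ'), θ − θ'⟩ ≥ (1/β)‖∇f(θ) − ∇f(θ')‖²`. -/
theorem gradient_cocoercive
    {d : ℕ} (f : EuclideanSpace ℝ (Fin d) → ℝ)
    (f' : EuclideanSpace ℝ (Fin d) → EuclideanSpace ℝ (Fin d))
    (hgrad : ∀ θ, HasGradientAt f (f' θ) θ)
    (hconv : ConvexOn ℝ Set.univ f)
    (β : ℝ) (hβ : 0 < β)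
    (hsm : ∀ θ θ' : EuclideanSpace ℝ (Fin d), ‖f' θ - f' θ'‖ ≤ β * ‖θ - θ'‖) :
    ∀ θ θ' : EuclideanSpace ℝ (Fin d),
      (1 / β) * ‖f' θ - f' θ'‖ ^ 2 ≤ ⟪f' θ - f' θ', θ - θ'⟫ := by
  intro θ θ'
  have h := hconv.add_inner_add_sq_norm_sub_le hgrad hβ hsm θ θ'
  have h' := hconv.add_inner_add_sq_norm_sub_le hgrad hβ hsm θ' θ
  rw [norm_sub_rev, ← neg_sub θ θ', inner_neg_right] at h
  rw [one_div, inner_sub_left]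
  linarith
end

section
/- Let z_1,…,z_n be i.i.d. samples from μ on Z, let f : Θ × Z → ℝ satisfy the bounded deviation condition |sup_z f(θ;z) − inf_z f(θ;z)| ≤ B for all θ, and let φ : Z^n → Θ be a deterministic map depending only on coordinates in a fixed index set I ⊆ [n] with |I| ≤ T < n. Set θ̂ := φ(z_1,…,z_n), F(θ) := E[f(θ;Z)], F̂(θ) := (1/n)∑_i f(θ;z_i). Then with probability at least 1 − δ, |F̂(θ̂) − F(θ̂)| ≤ BT/n + B√(log(2/δ)/(2n)). -/
/-!
Split the centred sum `∑ i, (f θ̂ zᵢ - F θ̂)` into the terms indexed by `I` and the rest. The at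
most `T` terms in `I` contribute at most `B T`. Since `θ̂` only depends on the coordinates in `I`,
disintegrating `Z^n ≃ Z^I × Z^Iᶜ` and fixing the first factor freezes `θ̂`; the remaining
`n - |I|` terms are then i.i.d. with range `B`, and Hoeffding's inequality bounds every slice of
the bad event by `δ`.
-/

open MeasureTheory ProbabilityTheory Real Finset

lemma exists_forall_mem_Icc_of_abs_sub_le {Z : Type*} [Nonempty Z] {g : Z → ℝ} {B : ℝ}
    (hB : ∀ z z', |g z - g z'| ≤ B) :
    ∃ a, ∀ z, g z ∈ Set.Icc a (a + B) := by
  obtain ⟨z₀⟩ := ‹Nonempty Z›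
  have hbdd : BddBelow (Set.range g) :=
    ⟨g z₀ - B, by rintro _ ⟨z, rfl⟩; linarith [(abs_le.mp (hB z₀ z)).2]⟩
  refine ⟨⨅ z, g z, fun z => ⟨ciInf_le hbdd z, ?_⟩⟩
  have : g z - B ≤ ⨅ z, g z := le_ciInf fun z' => by linarith [(abs_le.mp (hB z z')).2]
  linarith

lemma abs_sum_le_mul_add_abs_sum_compl {ι : Type*} [Fintype ι] [DecidableEq ι] {u : ι → ℝ}
    {I : Finset ι} {B : ℝ} (hB : 0 ≤ B) (hu : ∀ i ∈ I, |u i| ≤ B) {T : ℕ} (hI : #I ≤ T) :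
    |∑ i, u i| ≤ B * T + |∑ j : {j // j ∉ I}, u j| := by
  rw [← sum_add_sum_compl I, ← sum_subtype Iᶜ fun _ => mem_compl]
  have hIsum : |∑ i ∈ I, u i| ≤ B * T :=
    calc |∑ i ∈ I, u i| ≤ ∑ i ∈ I, |u i| := abs_sum_le_sum_abs _ _
      _ ≤ #I * B := by simpa using sum_le_card_nsmul I _ B hu
      _ ≤ B * T := by rw [mul_comm]; gcongr
  exact (abs_add_le _ _).trans (by linarith)

lemma abs_average_sub_le_of_abs_sum_compl_le {n : ℕ} (hn : 0 < n) {u : Fin n → ℝ} {c B ε : ℝ}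
    (hB : 0 ≤ B) (hu : ∀ i, |u i - c| ≤ B) {I : Finset (Fin n)} {T : ℕ} (hI : #I ≤ T)
    (hrest : |∑ j : {j // j ∉ I}, (u j - c)| ≤ n * ε) :
    |1 / (n : ℝ) * ∑ i, u i - c| ≤ B * T / n + ε := by
  have hn' : (0 : ℝ) < n := by exact_mod_cast hn
  have hsplit := abs_sum_le_mul_add_abs_sum_compl (u := fun i => u i - c) hB (fun i _ => hu i) hI
  have hmean : 1 / (n : ℝ) * ∑ i, u i - c = (∑ i, (u i - c)) / n := by
    simp only [sum_sub_distrib, sum_const, card_univ, Fintype.card_fin, nsmul_eq_mul]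
    field_simp
  rw [hmean, abs_div, abs_of_pos hn', div_le_iff₀ hn']
  calc _ ≤ B * T + n * ε := hsplit.trans (by linarith)
    _ = _ := by field_simp

lemma measure_pi_le_of_forall_measure_slice_le {ι : Type*} [Fintype ι] {α : ι → Type*}
    [∀ i, MeasurableSpace (α i)] (μ : ∀ i, Measure (α i)) [∀ i, IsProbabilityMeasure (μ i)]
    (p : ι → Prop) [DecidablePred p] {E : Set (∀ i, α i)} (hE : MeasurableSet E)
    {c : ENNReal}
    (hslice : ∀ x, Measure.pi (fun i : {i // ¬p i} => μ i)
      {y | (MeasurableEquiv.piEquivPiSubtypeProd α p).symm (x, y) ∈ E} ≤ c) :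
    Measure.pi μ E ≤ c := by
  set e := MeasurableEquiv.piEquivPiSubtypeProd α p
  rw [← ((measurePreserving_piEquivPiSubtypeProd μ p).symm e).measure_preimage_equiv E,
    Measure.prod_apply (e.symm.measurable hE)]
  calc _ ≤ ∫⁻ _, c ∂Measure.pi (fun i : Subtype p => μ i) := lintegral_mono hslice
    _ = c := by simp

section Hoeffding

variable {Z : Type*} [MeasurableSpace Z] {μ : Measure Z} [IsProbabilityMeasure μ]
  {g : Z → ℝ} {B : ℝ}

lemma abs_sub_integral_le_of_abs_sub_le (hg : Measurable g) (hB : ∀ z z', |g z - g z'| ≤ B)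
    (z : Z) : |g z - μ[g]| ≤ B := by
  have : Nonempty Z := nonempty_of_isProbabilityMeasure μ
  obtain ⟨a, ha⟩ := exists_forall_mem_Icc_of_abs_sub_le hB
  have hint : Integrable g μ := .of_mem_Icc a (a + B) hg.aemeasurable (ae_of_all _ ha)
  have hlo : a ≤ μ[g] := by
    simpa using integral_mono (integrable_const a) hint fun z => (ha z).1
  have hhi : μ[g] ≤ a + B := by
    simpa using integral_mono hint (integrable_const (a + B)) fun z => (ha z).2
  obtain ⟨hlo', hhi'⟩ := ha z
  exact abs_le.mpr ⟨by linarith, by linarith⟩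

lemma measureReal_sum_sub_integral_ge_le {ι : Type*} [Fintype ι] (hg : Measurable g)
    (hB : ∀ z z', |g z - g z'| ≤ B) {s : ℝ} (hs : 0 ≤ s) :
    (Measure.pi fun _ : ι => μ).real {y | s ≤ ∑ i, (g (y i) - μ[g])} ≤
      exp (-2 * s ^ 2 / (Fintype.card ι * B ^ 2)) := by
  have : Nonempty Z := nonempty_of_isProbabilityMeasure μ
  obtain ⟨a, ha⟩ := exists_forall_mem_Icc_of_abs_sub_le hB
  have hindep : iIndepFun (fun i (y : ι → Z) => g (y i) - μ[g]) (Measure.pi fun _ : ι => μ) :=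
    iIndepFun_pi (X := fun _ z => g z - μ[g]) fun _ => (hg.sub_const _).aemeasurable
  have hsubG : ∀ i, HasSubgaussianMGF (fun y : ι → Z => g (y i) - μ[g])
      ((‖a + B - a‖₊ / 2) ^ 2) (Measure.pi fun _ : ι => μ) := by
    intro i
    have := hasSubgaussianMGF_of_mem_Icc (μ := Measure.pi fun _ : ι => μ) (X := fun y => g (y i))
      (hg.comp (measurable_pi_apply i)).aemeasurable (ae_of_all _ fun y => ha (y i))
    rwa [integral_comp_eval hg.aestronglyMeasurable] at this
  refine (HasSubgaussianMGF.measure_sum_ge_le_of_iIndepFun hindep (s := univ)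
    (fun i _ => hsubG i) hs).trans_eq ?_
  congr 1
  simp only [sum_const, card_univ, nsmul_eq_mul, add_sub_cancel_left]
  push_cast
  rw [Real.norm_eq_abs, div_pow, sq_abs]
  ring

lemma measureReal_abs_sum_sub_integral_ge_le {ι : Type*} [Fintype ι] (hg : Measurable g)
    (hB : ∀ z z', |g z - g z'| ≤ B) {s : ℝ} (hs : 0 ≤ s) :
    (Measure.pi fun _ : ι => μ).real {y | s ≤ |∑ i, (g (y i) - μ[g])|} ≤
      2 * exp (-2 * s ^ 2 / (Fintype.card ι * B ^ 2)) := by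
  have hneg : ∀ y : ι → Z, ∑ i, ((-g) (y i) - μ[-g]) = -∑ i, (g (y i) - μ[g]) := by
    intro y
    simp only [Pi.neg_apply, integral_neg, ← sum_neg_distrib, neg_sub_neg, neg_sub]
  calc (Measure.pi fun _ : ι => μ).real {y | s ≤ |∑ i, (g (y i) - μ[g])|}
      ≤ (Measure.pi fun _ : ι => μ).real ({y | s ≤ ∑ i, (g (y i) - μ[g])} ∪
          {y | s ≤ ∑ i, ((-g) (y i) - μ[-g])}) := by
        refine measureReal_mono (fun y hy => ?_)
        simp only [Set.mem_ofPred_eq, Set.mem_union, hneg] at hy ⊢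
        exact le_abs.mp hy
    _ ≤ _ := measureReal_union_le _ _
    _ ≤ exp (-2 * s ^ 2 / (Fintype.card ι * B ^ 2)) +
          exp (-2 * s ^ 2 / (Fintype.card ι * B ^ 2)) :=
        add_le_add (measureReal_sum_sub_integral_ge_le hg hB hs)
          (measureReal_sum_sub_integral_ge_le hg.neg
            (fun z z' => by simpa only [Pi.neg_apply, neg_sub_neg, abs_sub_comm] using hB z z') hs)
    _ = _ := by ring

lemma measure_abs_sum_sub_integral_gt_le {ι : Type*} [Fintype ι] (hg : Measurable g)
    (hB : ∀ z z', |g z - g z'| ≤ B) (hι : 0 < Fintype.card ι) {N δ : ℝ}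
    (hN : Fintype.card ι ≤ N) (hδ0 : 0 < δ) (hδ2 : δ ≤ 2) :
    (Measure.pi fun _ : ι => μ)
        {y | N * (B * √(log (2 / δ) / (2 * N))) < |∑ i, (g (y i) - μ[g])|} ≤
      ENNReal.ofReal δ := by
  obtain ⟨z₀⟩ := nonempty_of_isProbabilityMeasure μ
  have hc : (0 : ℝ) < Fintype.card ι := by exact_mod_cast hι
  have hN0 : 0 < N := hc.trans_le hN
  have hL : 0 ≤ log (2 / δ) := log_nonneg (by rw [le_div_iff₀ hδ0]; linarith)
  set s := N * (B * √(log (2 / δ) / (2 * N)))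
  rcases ((abs_nonneg _).trans (hB z₀ z₀)).eq_or_lt with rfl | hBpos
  -- For `B = 0` the threshold is `0` and Hoeffding's bound is vacuous, but the sum vanishes.
  · have hempty : {y : ι → Z | s < |∑ i, (g (y i) - μ[g])|} = ∅ := by
      refine Set.eq_empty_of_forall_notMem fun y hy => ?_
      have hzero : ∀ i, g (y i) - μ[g] = 0 := fun i =>
        abs_nonpos_iff.mp (abs_sub_integral_le_of_abs_sub_le hg hB (y i))
      simp only [Set.mem_ofPred_eq, hzero, sum_const_zero, abs_zero, s, zero_mul,
        mul_zero, lt_self_iff_false] at hy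
    rw [hempty, measure_empty]
    exact zero_le
  have hs : 2 * s ^ 2 = N * B ^ 2 * log (2 / δ) := by
    simp only [s, mul_pow, sq_sqrt (div_nonneg hL (by positivity : (0 : ℝ) ≤ 2 * N))]
    field_simp
  have hexp : -2 * s ^ 2 / (Fintype.card ι * B ^ 2) ≤ -log (2 / δ) := by
    rw [neg_mul, neg_div, neg_le_neg_iff, le_div_iff₀ (by positivity), hs]
    nlinarith [mul_le_mul_of_nonneg_left hN (mul_nonneg hL (sq_nonneg B))]
  calc (Measure.pi fun _ : ι => μ) {y | s < |∑ i, (g (y i) - μ[g])|}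
      ≤ (Measure.pi fun _ : ι => μ) {y | s ≤ |∑ i, (g (y i) - μ[g])|} :=
        measure_mono fun _ hy => (Set.mem_ofPred_eq ▸ hy).le
    _ = ENNReal.ofReal ((Measure.pi fun _ : ι => μ).real {y | s ≤ |∑ i, (g (y i) - μ[g])|}) :=
        (ofReal_measureReal (by finiteness)).symm
    _ ≤ ENNReal.ofReal (2 * exp (-log (2 / δ))) := by
        refine ENNReal.ofReal_le_ofReal ((measureReal_abs_sum_sub_integral_ge_le hg hB
          (by positivity)).trans ?_)
        gcongr
    _ = ENNReal.ofReal δ := by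
        rw [exp_neg, exp_log (by positivity)]
        field_simp

lemma measure_abs_sum_compl_sub_integral_gt_le {Θ : Type*} [MeasurableSpace Θ]
    {ι : Type*} [Fintype ι] [DecidableEq ι] {f : Θ → Z → ℝ}
    (hf : Measurable (Function.uncurry f)) (hB : ∀ θ z z', |f θ z - f θ z'| ≤ B)
    {φ : (ι → Z) → Θ} (hφ : Measurable φ) {I : Finset ι}
    (hdep : ∀ z z' : ι → Z, (∀ i ∈ I, z i = z' i) → φ z = φ z')
    (hI : 0 < Fintype.card {j // j ∉ I}) {N δ : ℝ} (hN : Fintype.card {j // j ∉ I} ≤ N)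
    (hδ0 : 0 < δ) (hδ2 : δ ≤ 2) :
    (Measure.pi fun _ : ι => μ)
        {z | N * (B * √(log (2 / δ) / (2 * N))) <
          |∑ j : {j // j ∉ I}, (f (φ z) (z j) - ∫ z', f (φ z) z' ∂μ)|} ≤
      ENNReal.ofReal δ := by
  obtain ⟨z₀⟩ := nonempty_of_isProbabilityMeasure μ
  have hF : Measurable fun θ => ∫ z', f θ z' ∂μ :=
    hf.stronglyMeasurable.integral_prod_right'.measurable
  refine measure_pi_le_of_forall_measure_slice_le (fun _ : ι => μ) (· ∈ I) ?_ fun x => ?_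
  · refine measurableSet_lt measurable_const (Finset.measurable_sum _ fun j _ => ?_).abs
    exact (hf.comp (hφ.prodMk (measurable_pi_apply _))).sub (hF.comp hφ)
  set e := MeasurableEquiv.piEquivPiSubtypeProd (fun _ : ι => Z) (· ∈ I)
  set θ := φ (e.symm (x, fun _ => z₀))
  have hθ : ∀ y, φ (e.symm (x, y)) = θ := fun y =>
    hdep _ _ fun i hi => by simp [e, hi]
  have hy : ∀ y (j : {j // j ∉ I}), e.symm (x, y) j = y j := fun y j => by simp [e, j.2]
  simp only [Set.mem_ofPred_eq, hθ, hy]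
  exact measure_abs_sum_sub_integral_gt_le (hf.comp measurable_prodMk_left) (hB θ) hI hN hδ0 hδ2

end Hoeffding

/-- Concentration for a deterministic algorithm depending on at most `T` of the
`n` samples: with probability at least `1 − δ`,
`|F̂(θ̂) − F(θ̂)| ≤ BT/n + B √(log(2/δ)/(2n))` where `θ̂ = φ(z₁,…,z_n)`. -/
theorem algorithm_dependent_concentration
    {Θ : Type*} [MeasurableSpace Θ] {Z : Type*} [MeasurableSpace Z]
    (μ : Measure Z) [IsProbabilityMeasure μ]
    (f : Θ → Z → ℝ) (B : ℝ) (hB : 0 ≤ B)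
    (hfmeas : Measurable (Function.uncurry f))
    (hdev : ∀ θ, ∀ z z' : Z, |f θ z - f θ z'| ≤ B)
    (n T : ℕ) (hTn : T < n)
    (φ : (Fin n → Z) → Θ) (hφmeas : Measurable φ)
    (I : Finset (Fin n)) (hI : I.card ≤ T)
    (hdep : ∀ z z' : Fin n → Z, (∀ i ∈ I, z i = z' i) → φ z = φ z')
    (δ : ℝ) (hδ0 : 0 < δ) (hδ1 : δ < 1) :
    ENNReal.ofReal (1 - δ) ≤
      (Measure.pi fun _ : Fin n => μ)
        {z | |(1 / (n : ℝ)) * ∑ i, f (φ z) (z i) - ∫ z', f (φ z) z' ∂μ| ≤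
          B * T / n + B * Real.sqrt (Real.log (2 / δ) / (2 * n))} := by
  set E := {z : Fin n → Z | n * (B * √(log (2 / δ) / (2 * n))) <
    |∑ j : {j // j ∉ I}, (f (φ z) (z j) - ∫ z', f (φ z) z' ∂μ)|}
  have hcard : Fintype.card {j // j ∉ I} = n - #I := by
    rw [Fintype.card_subtype_compl, Fintype.card_coe, Fintype.card_fin]
  have hE : Measure.pi (fun _ => μ) E ≤ ENNReal.ofReal δ :=
    measure_abs_sum_compl_sub_integral_gt_le hfmeas hdev hφmeas hdep (by omega)
      (by exact_mod_cast hcard ▸ Nat.sub_le n #I) hδ0 (by linarith)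
  have hgood : Eᶜ ⊆ {z | |(1 / (n : ℝ)) * ∑ i, f (φ z) (z i) - ∫ z', f (φ z) z' ∂μ| ≤
      B * T / n + B * √(log (2 / δ) / (2 * n))} := fun z hz =>
    abs_average_sub_le_of_abs_sum_compl_le (by omega) hB
      (fun i => abs_sub_integral_le_of_abs_sub_le (hfmeas.comp measurable_prodMk_left)
        (hdev _) _) hI (not_lt.mp hz)
  calc ENNReal.ofReal (1 - δ) = 1 - ENNReal.ofReal δ := by
        rw [← ENNReal.ofReal_one, ENNReal.ofReal_sub _ hδ0.le]
    _ ≤ 1 - Measure.pi (fun _ => μ) E := tsub_le_tsub_left hE 1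
    _ ≤ Measure.pi (fun _ => μ) Eᶜ := by
        rw [tsub_le_iff_left, ← measure_univ (μ := Measure.pi fun _ : Fin n => μ)]
        exact measure_univ_le_add_compl E
    _ ≤ _ := measure_mono hgood
end

section
/- Let Θ ⊆ B_R(0) and suppose for each z ∈ Z the map g(·;z) : Θ → Θ is γ-contractive with γ ∈ (0,1), and f satisfies the weak Lipschitz condition with constant L and the bounded deviation condition with constant B. Fix T := max{⌈log(2LRn)/log(1/γ)⌉, 0}. Then for any fixed θ^(0) ∈ Θ, any t ≥ 0, and any fixed indices i_1,…,i_t ∈ [n], the iterate θ^(t) := g(·;z_{i_t}) ∘ ⋯ ∘ g(·;z_{i_1})(θ^(0)) satisfies |E_{z_1,…,z_n}[F̂(θ^(t)) − F(θ^(t))]| ≤ (BT + 1)/n, where F̂(θ) = (1/n)∑_i f(θ;z_i), F(θ) = E[f(θ;Z)], and z_1,…,z_n are i.i.d. -/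
open MeasureTheory

/-- The SGD iterate obtained from the data `zs` along the index list
`l = [i₁, …, i_t]`, applying `g(·; zs i₁)` first. -/
def sgdIter {E : Type*} {Z : Type*} {n : ℕ} (g : Z → E → E) (zs : Fin n → Z)
    (l : List (Fin n)) (θ0 : E) : E :=
  l.foldl (fun acc i => g (zs i) acc) θ0

/-!
Contractivity makes the iterate forget its distant past: restarting the recursion from `0`
only `T` steps before the end moves it by at most `γ ^ T * R ≤ 1 / (2 L n)`, and by weak
Lipschitzness this changes every centered loss `f θ z - 𝔼 f θ` by at most `1 / n` (the
unknown offset `h θ` cancels after centering). The restarted iterate sees at most `T` sample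
points; at any other point `zᵢ` resampling `zᵢ` preserves the product measure, so its expected
centered loss vanishes, while at the `≤ T` points it sees, bounded deviation caps it by `B`.
-/

section Probability

variable {Ω : Type*} [MeasurableSpace Ω] {μ : Measure Ω} [IsProbabilityMeasure μ]

lemma abs_integral_le_of_forall_abs_le {F : Ω → ℝ} {C : ℝ} (hF : ∀ x, |F x| ≤ C) :
    |∫ x, F x ∂μ| ≤ C := by
  simpa using norm_integral_le_of_norm_le_const (μ := μ) (f := F) (ae_of_all _ hF)

lemma integrable_of_forall_abs_le {F : Ω → ℝ} (hF : Measurable F) {C : ℝ}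
    (hFC : ∀ x, |F x| ≤ C) : Integrable F μ :=
  .of_bound hF.aestronglyMeasurable C (ae_of_all _ hFC)

lemma abs_sub_integral_le {F : Ω → ℝ} (hF : Integrable F μ) {B : ℝ}
    (hdev : ∀ x y, |F x - F y| ≤ B) (x : Ω) : |F x - ∫ y, F y ∂μ| ≤ B := by
  have : F x - ∫ y, F y ∂μ = ∫ y, (F x - F y) ∂μ := by
    rw [integral_sub (integrable_const _) hF, integral_const, probReal_univ, one_smul]
  exact this ▸ abs_integral_le_of_forall_abs_le (hdev x)

end Probability

lemma measurePreserving_update_pi {ι : Type*} [Fintype ι] [DecidableEq ι] {α : ι → Type*}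
    [∀ i, MeasurableSpace (α i)] (μ : ∀ i, Measure (α i))
    [∀ i, IsProbabilityMeasure (μ i)] (i : ι) :
    MeasurePreserving (fun p : (∀ j, α j) × α i => Function.update p.1 i p.2)
      ((Measure.pi μ).prod (μ i)) (Measure.pi μ) := by
  refine ⟨measurable_update', (Measure.pi_eq fun s hs => ?_).symm⟩
  have hpre : (fun p : (∀ j, α j) × α i => Function.update p.1 i p.2) ⁻¹' Set.univ.pi s
      = Set.univ.pi (Function.update s i Set.univ) ×ˢ s i := by
    ext ⟨x, y⟩
    simp only [Set.mem_preimage, Set.mem_univ_pi, Set.mem_prod]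
    rw [Function.forall_update_iff (p := fun j (a : α j) => a ∈ s j),
      Function.forall_update_iff (p := fun j (t : Set (α j)) => x j ∈ t)]
    simp [and_comm]
  rw [Measure.map_apply measurable_update' (.univ_pi hs), hpre, Measure.prod_prod,
    Measure.pi_pi, ← Finset.prod_erase_mul _ _ (Finset.mem_univ i),
    ← Finset.prod_erase_mul _ _ (Finset.mem_univ i), Function.update_self, measure_univ, mul_one]
  exact congrArg (· * _) (Finset.prod_congr rfl fun j hj => by
    rw [Function.update_of_ne (Finset.ne_of_mem_erase hj)])

/-- `F̂(θ) - F(θ)` is the average of `centeredLoss μ f θ` over the sample. -/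
noncomputable def centeredLoss {E Z : Type*} [MeasurableSpace Z] (μ : Measure Z)
    (f : E → Z → ℝ) (θ : E) (z : Z) : ℝ :=
  f θ z - ∫ z', f θ z' ∂μ

section CenteredLoss

variable {E Z : Type*} [MeasurableSpace Z] {μ : Measure Z} [IsProbabilityMeasure μ]
  {f : E → Z → ℝ}

lemma integral_centeredLoss {θ : E} (hθ : Integrable (f θ) μ) :
    ∫ z, centeredLoss μ f θ z ∂μ = 0 := by
  simp only [centeredLoss]
  rw [integral_sub hθ (integrable_const _), integral_const, probReal_univ, one_smul, sub_self]

lemma abs_centeredLoss_le {θ : E} (hθ : Integrable (f θ) μ) {B : ℝ}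
    (hdev : ∀ z z', |f θ z - f θ z'| ≤ B) (z : Z) : |centeredLoss μ f θ z| ≤ B :=
  abs_sub_integral_le hθ hdev z

lemma abs_centeredLoss_sub_le {θ φ : E} (hθ : Integrable (f θ) μ) (hφ : Integrable (f φ) μ)
    {h : E → ℝ} {ε : ℝ} (hclose : ∀ z, |f θ z - h θ - (f φ z - h φ)| ≤ ε) (z : Z) :
    |centeredLoss μ f θ z - centeredLoss μ f φ z| ≤ 2 * ε := by
  have hsplit : centeredLoss μ f θ z - centeredLoss μ f φ z
      = (f θ z - f φ z) - ∫ z', (f θ z' - f φ z') ∂μ := by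
    rw [integral_sub hθ hφ]; simp only [centeredLoss]; ring
  rw [hsplit]
  refine abs_sub_integral_le (hθ.sub hφ) (fun x y => ?_) z
  calc |f θ x - f φ x - (f θ y - f φ y)|
      = |(f θ x - h θ - (f φ x - h φ)) - (f θ y - h θ - (f φ y - h φ))| := by ring_nf
    _ ≤ ε + ε := (abs_sub _ _).trans (add_le_add (hclose x) (hclose y))
    _ = 2 * ε := by ring

lemma measurable_centeredLoss [MeasurableSpace E] (hf : Measurable (Function.uncurry f)) :
    Measurable (Function.uncurry (centeredLoss μ f)) := by
  have hF : Measurable fun θ => ∫ z, f θ z ∂μ :=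
    (hf.stronglyMeasurable.integral_prod_right' (ν := μ)).measurable
  exact hf.sub (hF.comp measurable_fst)

end CenteredLoss

section Sample

variable {E Z ι : Type*} [MeasurableSpace E] [MeasurableSpace Z] {μ : Measure Z}
  [IsProbabilityMeasure μ] [Fintype ι] [DecidableEq ι] {f : E → Z → ℝ} {Θ : Set E} {B : ℝ}

lemma integral_centeredLoss_eq_zero_of_update_invariant (hf : Measurable (Function.uncurry f))
    (hint : ∀ θ ∈ Θ, Integrable (f θ) μ) (hdev : ∀ θ ∈ Θ, ∀ z z', |f θ z - f θ z'| ≤ B)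
    {w : (ι → Z) → E} (hw : Measurable w) (hwΘ : ∀ zs, w zs ∈ Θ) (i : ι)
    (hwi : ∀ zs z, w (Function.update zs i z) = w zs) :
    ∫ zs, centeredLoss μ f (w zs) (zs i) ∂Measure.pi (fun _ => μ) = 0 := by
  set P := Measure.pi fun _ : ι => μ
  have hupd := measurePreserving_update_pi (fun _ : ι => μ) i
  have hG : Measurable fun p : (ι → Z) × Z => centeredLoss μ f (w p.1) p.2 :=
    (measurable_centeredLoss hf).comp ((hw.comp measurable_fst).prodMk measurable_snd)
  calc ∫ zs, centeredLoss μ f (w zs) (zs i) ∂P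
      = ∫ p : (ι → Z) × Z, centeredLoss μ f (w (Function.update p.1 i p.2))
          (Function.update p.1 i p.2 i) ∂P.prod μ := by
        have hmeas :=
          (measurable_centeredLoss (μ := μ) hf).comp (hw.prodMk (measurable_pi_apply i))
        have h := integral_map (f := fun zs => centeredLoss μ f (w zs) (zs i))
          hupd.measurable.aemeasurable (by rw [hupd.map_eq]; exact hmeas.aestronglyMeasurable)
        rwa [hupd.map_eq] at h
    _ = ∫ p : (ι → Z) × Z, centeredLoss μ f (w p.1) p.2 ∂P.prod μ := by
        simp only [hwi, Function.update_self]
    _ = ∫ zs, ∫ z, centeredLoss μ f (w zs) z ∂μ ∂P :=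
        integral_prod _ (integrable_of_forall_abs_le hG fun p =>
          abs_centeredLoss_le (hint _ (hwΘ p.1)) (hdev _ (hwΘ p.1)) p.2)
    _ = 0 := by simp only [integral_centeredLoss (hint _ (hwΘ _)), integral_zero]

lemma abs_integral_sum_centeredLoss_le (hf : Measurable (Function.uncurry f))
    (hint : ∀ θ ∈ Θ, Integrable (f θ) μ) (hdev : ∀ θ ∈ Θ, ∀ z z', |f θ z - f θ z'| ≤ B)
    {θ φ : (ι → Z) → E} (hθ : Measurable θ) (hφ : Measurable φ)
    (hθΘ : ∀ zs, θ zs ∈ Θ) (hφΘ : ∀ zs, φ zs ∈ Θ) {h : E → ℝ} {ε : ℝ}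
    (hclose : ∀ zs z, |f (θ zs) z - h (θ zs) - (f (φ zs) z - h (φ zs))| ≤ ε)
    (S : Finset ι) (hφS : ∀ i ∉ S, ∀ zs z, φ (Function.update zs i z) = φ zs) :
    |∫ zs, ∑ i, centeredLoss μ f (θ zs) (zs i) ∂Measure.pi (fun _ => μ)|
      ≤ B * S.card + 2 * ε * Fintype.card ι := by
  set P := Measure.pi fun _ : ι => μ
  have hbound : ∀ w : (ι → Z) → E, (∀ zs, w zs ∈ Θ) → ∀ i zs,
      |centeredLoss μ f (w zs) (zs i)| ≤ B := fun w hwΘ i zs =>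
    abs_centeredLoss_le (hint _ (hwΘ zs)) (hdev _ (hwΘ zs)) _
  have hintegrable : ∀ w : (ι → Z) → E, Measurable w → (∀ zs, w zs ∈ Θ) → ∀ i,
      Integrable (fun zs => centeredLoss μ f (w zs) (zs i)) P := fun w hw hwΘ i =>
    integrable_of_forall_abs_le
      ((measurable_centeredLoss hf).comp (hw.prodMk (measurable_pi_apply i))) (hbound w hwΘ i)
  have hφi : ∀ i, |∫ zs, centeredLoss μ f (φ zs) (zs i) ∂P| ≤ if i ∈ S then B else 0 := by
    intro i
    split_ifs with hi
    · exact abs_integral_le_of_forall_abs_le (hbound φ hφΘ i)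
    · rw [integral_centeredLoss_eq_zero_of_update_invariant hf hint hdev hφ hφΘ i (hφS i hi),
        abs_zero]
  have hθi : ∀ i, |∫ zs, centeredLoss μ f (θ zs) (zs i) ∂P|
      ≤ (if i ∈ S then B else 0) + 2 * ε := by
    intro i
    have hdiff : |∫ zs, centeredLoss μ f (θ zs) (zs i) ∂P
        - ∫ zs, centeredLoss μ f (φ zs) (zs i) ∂P| ≤ 2 * ε := by
      rw [← integral_sub (hintegrable θ hθ hθΘ i) (hintegrable φ hφ hφΘ i)]
      exact abs_integral_le_of_forall_abs_le fun zs =>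
        abs_centeredLoss_sub_le (hint _ (hθΘ zs)) (hint _ (hφΘ zs)) (hclose zs) _
    linarith [abs_sub_abs_le_abs_sub (∫ zs, centeredLoss μ f (θ zs) (zs i) ∂P)
      (∫ zs, centeredLoss μ f (φ zs) (zs i) ∂P), hφi i]
  calc |∫ zs, ∑ i, centeredLoss μ f (θ zs) (zs i) ∂P|
      = |∑ i, ∫ zs, centeredLoss μ f (θ zs) (zs i) ∂P| := by
        rw [integral_finsetSum _ fun i _ => hintegrable θ hθ hθΘ i]
    _ ≤ ∑ i, ((if i ∈ S then B else 0) + 2 * ε) :=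
        (Finset.abs_sum_le_sum_abs _ _).trans (Finset.sum_le_sum fun i _ => hθi i)
    _ = B * S.card + 2 * ε * Fintype.card ι := by
        rw [Finset.sum_add_distrib, Finset.sum_ite_mem, Finset.univ_inter, Finset.sum_const,
          Finset.sum_const, Finset.card_univ, nsmul_eq_mul, nsmul_eq_mul]
        ring

end Sample

section Sgd

variable {E Z : Type*} {n : ℕ} {g : Z → E → E}

lemma sgdIter_cons (zs : Fin n → Z) (i : Fin n) (l : List (Fin n)) (x : E) :
    sgdIter g zs (i :: l) x = sgdIter g zs l (g (zs i) x) := rfl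

lemma sgdIter_append (zs : Fin n → Z) (l₁ l₂ : List (Fin n)) (x : E) :
    sgdIter g zs (l₁ ++ l₂) x = sgdIter g zs l₂ (sgdIter g zs l₁ x) :=
  List.foldl_append

lemma sgdIter_mem {Θ : Set E} (hg : ∀ z, Set.MapsTo (g z) Θ Θ) (zs : Fin n → Z)
    (l : List (Fin n)) {x : E} (hx : x ∈ Θ) : sgdIter g zs l x ∈ Θ := by
  induction l generalizing x with
  | nil => exact hx
  | cons i l ih => exact ih (hg _ hx)

lemma sgdIter_update_of_notMem (zs : Fin n → Z) {i : Fin n} {l : List (Fin n)} (hi : i ∉ l)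
    (z : Z) (x : E) : sgdIter g (Function.update zs i z) l x = sgdIter g zs l x := by
  induction l generalizing x with
  | nil => rfl
  | cons j l ih =>
    rw [List.mem_cons, not_or] at hi
    rw [sgdIter_cons, sgdIter_cons, Function.update_of_ne (Ne.symm hi.1), ih hi.2]

lemma measurable_sgdIter [MeasurableSpace E] [MeasurableSpace Z]
    (hg : Measurable (Function.uncurry g)) (l : List (Fin n)) {x : (Fin n → Z) → E}
    (hx : Measurable x) : Measurable fun zs => sgdIter g zs l (x zs) := by
  induction l generalizing x with
  | nil => exact hx
  | cons i l ih => exact ih (hg.comp ((measurable_pi_apply i).prodMk hx))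

variable [NormedAddCommGroup E] {Θ : Set E} {γ : ℝ}

lemma norm_sgdIter_sub_le (hγ : 0 ≤ γ) (hg : ∀ z, Set.MapsTo (g z) Θ Θ)
    (hcontr : ∀ z, ∀ θ ∈ Θ, ∀ θ' ∈ Θ, ‖g z θ - g z θ'‖ ≤ γ * ‖θ - θ'‖)
    (zs : Fin n → Z) (l : List (Fin n)) {x y : E} (hx : x ∈ Θ) (hy : y ∈ Θ) :
    ‖sgdIter g zs l x - sgdIter g zs l y‖ ≤ γ ^ l.length * ‖x - y‖ := by
  induction l generalizing x y with
  | nil => simp [sgdIter]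
  | cons i l ih =>
    calc ‖sgdIter g zs l (g (zs i) x) - sgdIter g zs l (g (zs i) y)‖
        ≤ γ ^ l.length * ‖g (zs i) x - g (zs i) y‖ := ih (hg _ hx) (hg _ hy)
      _ ≤ γ ^ l.length * (γ * ‖x - y‖) := by gcongr; exact hcontr _ _ hx _ hy
      _ = γ ^ (i :: l).length * ‖x - y‖ := by rw [List.length_cons, pow_succ, mul_assoc]

/-- The witness `l'` is the last `T` indices of `l`, run from `0` (or all of `l`, run from
`θ0`, when `l` is shorter). -/
lemma exists_sgdIter_window_approx (hγ : 0 ≤ γ) (hg : ∀ z, Set.MapsTo (g z) Θ Θ)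
    (hcontr : ∀ z, ∀ θ ∈ Θ, ∀ θ' ∈ Θ, ‖g z θ - g z θ'‖ ≤ γ * ‖θ - θ'‖) {R : ℝ}
    (hΘR : Θ ⊆ Metric.closedBall 0 R) (h0 : (0 : E) ∈ Θ) {θ0 : E} (hθ0 : θ0 ∈ Θ)
    (l : List (Fin n)) (T : ℕ) :
    ∃ l' : List (Fin n), l'.length ≤ T ∧ ∃ x ∈ Θ,
      ∀ zs, ‖sgdIter g zs l θ0 - sgdIter g zs l' x‖ ≤ γ ^ T * R := by
  rcases le_or_gt T l.length with hT | hT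
  · set k := l.length - T
    have hlen : (l.drop k).length = T := by simp only [List.length_drop, k]; omega
    refine ⟨l.drop k, hlen.le, 0, h0, fun zs => ?_⟩
    have hprefix := sgdIter_mem hg zs (l.take k) hθ0
    calc ‖sgdIter g zs l θ0 - sgdIter g zs (l.drop k) 0‖
        = ‖sgdIter g zs (l.drop k) (sgdIter g zs (l.take k) θ0)
            - sgdIter g zs (l.drop k) 0‖ := by
          rw [← sgdIter_append, List.take_append_drop]
      _ ≤ γ ^ T * ‖sgdIter g zs (l.take k) θ0 - 0‖ :=
          hlen ▸ norm_sgdIter_sub_le hγ hg hcontr zs _ hprefix h0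
      _ ≤ γ ^ T * R := by
          gcongr; simpa using hΘR hprefix
  · have hR : 0 ≤ R := by simpa using hΘR h0
    exact ⟨l, hT.le, θ0, hθ0, fun zs => by simp only [sub_self, norm_zero]; positivity⟩

end Sgd

lemma pow_mul_le_one_of_log_div_log_inv_le {γ c : ℝ} {T : ℕ} (hγ0 : 0 < γ) (hγ1 : γ < 1)
    (hT : Real.log c / Real.log (1 / γ) ≤ T) : γ ^ T * c ≤ 1 := by
  rcases le_or_gt c 0 with hc | hc
  · nlinarith [pow_pos hγ0 T]
  have hlogγ : 0 < Real.log (1 / γ) := Real.log_pos (one_lt_one_div hγ0 hγ1)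
  rw [div_le_iff₀ hlogγ, one_div, Real.log_inv] at hT
  rw [← Real.log_nonpos_iff (by positivity), Real.log_mul (by positivity) hc.ne', Real.log_pow]
  linarith

theorem expected_generalization_gap_general
    {d n : ℕ} {Z : Type*} [MeasurableSpace Z]
    (μ : Measure Z) [IsProbabilityMeasure μ]
    (R γ L B : ℝ) (hγ0 : 0 < γ) (hγ1 : γ < 1)
    (hL : 0 < L) (hB : 0 ≤ B) (hn : 0 < n)
    (Θ : Set (EuclideanSpace ℝ (Fin d)))
    (hΘR : Θ ⊆ Metric.closedBall 0 R) (h0 : (0 : EuclideanSpace ℝ (Fin d)) ∈ Θ)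
    (g : Z → EuclideanSpace ℝ (Fin d) → EuclideanSpace ℝ (Fin d))
    (hgmaps : ∀ z : Z, Set.MapsTo (g z) Θ Θ)
    (hcontr : ∀ z : Z, ∀ θ ∈ Θ, ∀ θ' ∈ Θ, ‖g z θ - g z θ'‖ ≤ γ * ‖θ - θ'‖)
    (f : EuclideanSpace ℝ (Fin d) → Z → ℝ)
    (hf : EuclideanSpace ℝ (Fin d) → ℝ)
    (hweakLip : ∀ θ ∈ Θ, ∀ θ' ∈ Θ, ∀ z : Z,
      |f θ z - hf θ - (f θ' z - hf θ')| ≤ L * ‖θ - θ'‖)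
    (hdev : ∀ θ ∈ Θ, ∀ z z' : Z, |f θ z - f θ z'| ≤ B)
    (hfmeas : Measurable (Function.uncurry f))
    (hgmeas : Measurable (Function.uncurry g))
    (hint : ∀ θ ∈ Θ, Integrable (f θ) μ)
    (T : ℕ)
    (hT : (T : ℤ) = max ⌈Real.log (2 * L * R * n) / Real.log (1 / γ)⌉ 0)
    (θ0 : EuclideanSpace ℝ (Fin d)) (hθ0 : θ0 ∈ Θ)
    (l : List (Fin n)) :
    |∫ zs : Fin n → Z,
        ((1 / (n : ℝ)) * ∑ i, f (sgdIter g zs l θ0) (zs i) -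
          ∫ z, f (sgdIter g zs l θ0) z ∂μ)
      ∂(Measure.pi fun _ : Fin n => μ)| ≤ (B * T + 1) / n := by
  have hn' : (0 : ℝ) < n := Nat.cast_pos.mpr hn
  obtain ⟨l', hl'T, x, hxΘ, happrox⟩ :=
    exists_sgdIter_window_approx hγ0.le hgmaps hcontr hΘR h0 hθ0 l T
  have hγT : γ ^ T * (2 * L * R * n) ≤ 1 := by
    refine pow_mul_le_one_of_log_div_log_inv_le hγ0 hγ1 ((Int.le_ceil _).trans ?_)
    exact_mod_cast hT ▸ le_max_left _ _
  have hclose : ∀ zs z, |f (sgdIter g zs l θ0) z - hf (sgdIter g zs l θ0)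
      - (f (sgdIter g zs l' x) z - hf (sgdIter g zs l' x))| ≤ 1 / (2 * n) := fun zs z => by
    calc _ ≤ L * ‖sgdIter g zs l θ0 - sgdIter g zs l' x‖ :=
          hweakLip _ (sgdIter_mem hgmaps zs l hθ0) _ (sgdIter_mem hgmaps zs l' hxΘ) z
      _ ≤ L * (γ ^ T * R) := by gcongr; exact happrox zs
      _ ≤ 1 / (2 * n) := by rw [le_div_iff₀ (by positivity)]; linarith
  have hgap := abs_integral_sum_centeredLoss_le hfmeas hint hdev
    (measurable_sgdIter hgmeas l measurable_const) (measurable_sgdIter hgmeas l' measurable_const)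
    (fun zs => sgdIter_mem hgmaps zs l hθ0) (fun zs => sgdIter_mem hgmaps zs l' hxΘ) hclose
    l'.toFinset fun i hi zs z => sgdIter_update_of_notMem zs (by simpa using hi) z x
  have hcard : (l'.toFinset.card : ℝ) ≤ T := by exact_mod_cast l'.toFinset_card_le.trans hl'T
  have hempirical : ∀ zs : Fin n → Z,
      (1 / (n : ℝ)) * ∑ i, f (sgdIter g zs l θ0) (zs i) - ∫ z, f (sgdIter g zs l θ0) z ∂μ
        = (1 / n) * ∑ i, centeredLoss μ f (sgdIter g zs l θ0) (zs i) := fun zs => by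
    simp only [centeredLoss, Finset.sum_sub_distrib, Finset.sum_const, Finset.card_univ,
      Fintype.card_fin, nsmul_eq_mul]
    field_simp
  simp only [hempirical, integral_const_mul, abs_mul, abs_of_pos (one_div_pos.mpr hn')]
  rw [Fintype.card_fin] at hgap
  calc 1 / (n : ℝ) * |_| ≤ 1 / n * (B * l'.toFinset.card + 2 * (1 / (2 * n)) * n) := by gcongr
    _ = (B * l'.toFinset.card + 1) / n := by field_simp
    _ ≤ (B * T + 1) / n := by gcongr

/-- Expected generalization gap bound for a contractive iterative stochastic
algorithm: under weak Lipschitzness and bounded deviation, for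
`T = max{⌈log(2LRn)/log(1/γ)⌉, 0}` and any fixed initialization and index
sequence, `|E[F̂(θ^(t)) − F(θ^(t))]| ≤ (BT + 1)/n`. -/
theorem expected_generalization_gap
    {d n : ℕ} {Z : Type*} [MeasurableSpace Z]
    (μ : Measure Z) [IsProbabilityMeasure μ]
    (R γ L B : ℝ) (hR : 0 < R) (hγ0 : 0 < γ) (hγ1 : γ < 1)
    (hL : 0 < L) (hB : 0 ≤ B) (hn : 0 < n)
    (Θ : Set (EuclideanSpace ℝ (Fin d)))
    (hΘR : Θ ⊆ Metric.closedBall 0 R) (h0 : (0 : EuclideanSpace ℝ (Fin d)) ∈ Θ)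
    (g : Z → EuclideanSpace ℝ (Fin d) → EuclideanSpace ℝ (Fin d))
    (hgmaps : ∀ z : Z, Set.MapsTo (g z) Θ Θ)
    (hcontr : ∀ z : Z, ∀ θ ∈ Θ, ∀ θ' ∈ Θ, ‖g z θ - g z θ'‖ ≤ γ * ‖θ - θ'‖)
    (f : EuclideanSpace ℝ (Fin d) → Z → ℝ)
    (hf : EuclideanSpace ℝ (Fin d) → ℝ)
    (hweakLip : ∀ θ ∈ Θ, ∀ θ' ∈ Θ, ∀ z : Z,
      |f θ z - hf θ - (f θ' z - hf θ')| ≤ L * ‖θ - θ'‖)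
    (hdev : ∀ θ ∈ Θ, ∀ z z' : Z, |f θ z - f θ z'| ≤ B)
    (hfmeas : Measurable (Function.uncurry f))
    (hgmeas : Measurable (Function.uncurry g))
    (hint : ∀ θ ∈ Θ, Integrable (f θ) μ)
    (T : ℕ)
    (hT : (T : ℤ) = max ⌈Real.log (2 * L * R * n) / Real.log (1 / γ)⌉ 0)
    (θ0 : EuclideanSpace ℝ (Fin d)) (hθ0 : θ0 ∈ Θ)
    (l : List (Fin n))
    (hintall : Integrable
      (fun zs : Fin n → Z =>
        (1 / (n : ℝ)) * ∑ i, f (sgdIter g zs l θ0) (zs i) -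
          ∫ z, f (sgdIter g zs l θ0) z ∂μ)
      (Measure.pi fun _ : Fin n => μ)) :
    |∫ zs : Fin n → Z,
        ((1 / (n : ℝ)) * ∑ i, f (sgdIter g zs l θ0) (zs i) -
          ∫ z, f (sgdIter g zs l θ0) z ∂μ)
      ∂(Measure.pi fun _ : Fin n => μ)| ≤ (B * T + 1) / n :=
  expected_generalization_gap_general μ R γ L B hγ0 hγ1 hL hB hn Θ hΘR h0 g hgmaps hcontr f hf
    hweakLip hdev hfmeas hgmeas hint T hT θ0 hθ0 l
end
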